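/- Define W : ℝ^{3×3} → (−∞, +∞] by W(F) = (|F₁|³ + |F₂|³ + |F₃|³)/3 + 1/det F if det F > 0 and W(F) = +∞ otherwise, where F₁, F₂, F₃ are the columns of F. Let π ∈ ℝ and let ξ₁, ξ₂ ∈ ℝ³ with ξ₁ × ξ₂ ≠ 0. Then s(ξ₁ × ξ₂) := |ξ₁ × ξ₂| √(4|ξ₁ × ξ₂| + π²|ξ₁ × ξ₂|⁴) − π|ξ₁ × ξ₂|³ is strictly positive, and the infimum over a ∈ ℝ³ of W(ξ₁|ξ₂|a) + π det(ξ₁|ξ₂|a) is attained and equals (|ξ₁|³ + |ξ₂|³)/3 + (√2/3) [ 4/√(s(ξ₁ × ξ₂)) + π √(s(ξ₁ × ξ₂)) ]. -/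

import Mathlib

noncomputable section

/-- The Euclidean norm on `ℝ³`. -/
def enr (v : Fin 3 → ℝ) : ℝ := Real.sqrt (∑ i, (v i) ^ 2)

/-- The cross product on `ℝ³`. -/
def cross (u w : Fin 3 → ℝ) : Fin 3 → ℝ :=
  ![u 1 * w 2 - u 2 * w 1, u 2 * w 0 - u 0 * w 2, u 0 * w 1 - u 1 * w 0]

/-- The `3 × 3` matrix with columns `ξ₁, ξ₂, a`. -/
def colsMat (ξ₁ ξ₂ a : Fin 3 → ℝ) : Matrix (Fin 3) (Fin 3) ℝ :=
  Matrix.of fun i j => ![ξ₁, ξ₂, a] j i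

/-- The stored energy density `W(F) = (|F₁|³+|F₂|³+|F₃|³)/3 + 1/det F` for `det F > 0`,
`+∞` otherwise. -/
def Wex (F : Matrix (Fin 3) (Fin 3) ℝ) : EReal :=
  if 0 < F.det then
    ((((enr fun i => F i 0) ^ 3 + (enr fun i => F i 1) ^ 3 + (enr fun i => F i 2) ^ 3) / 3
      + 1 / F.det : ℝ) : EReal)
  else ⊤

/-- The quantity `s(v) = |v|√(4|v| + π²|v|⁴) − π|v|³`. -/
def sfun (π : ℝ) (v : Fin 3 → ℝ) : ℝ :=
  enr v * Real.sqrt (4 * enr v + π ^ 2 * (enr v) ^ 4) - π * (enr v) ^ 3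

/-!
Since `det(ξ₁|ξ₂|a) = a · (ξ₁ × ξ₂)`, Cauchy–Schwarz gives `|a| ≥ t / c` for `t = det > 0` and
`c = |ξ₁ × ξ₂|`, with equality when `a` is parallel to `ξ₁ × ξ₂`. The problem therefore reduces to
minimizing `t ↦ (t / c)³ / 3 + 1 / t + π t` over `t > 0`; its unique critical point satisfies
`t⁴ + π c³ t² = c³`, i.e. `t² = s(ξ₁ × ξ₂) / 2`.
-/

open Matrix WithLp

lemma enr_eq_norm (v : Fin 3 → ℝ) : enr v = ‖toLp 2 v‖ := by
  simp [enr, EuclideanSpace.norm_eq]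

lemma cross_eq_crossProduct (u w : Fin 3 → ℝ) : cross u w = u ⨯₃ w := rfl

lemma det_colsMat (ξ₁ ξ₂ a : Fin 3 → ℝ) : (colsMat ξ₁ ξ₂ a).det = a ⬝ᵥ cross ξ₁ ξ₂ := by
  rw [cross_eq_crossProduct, triple_product_permutation, triple_product_eq_det,
    ← det_transpose]
  rfl

lemma dotProduct_le_enr_mul_enr (v a : Fin 3 → ℝ) : a ⬝ᵥ v ≤ enr v * enr a := by
  simpa [enr_eq_norm, EuclideanSpace.inner_toLp_toLp] using
    real_inner_le_norm (toLp 2 v) (toLp 2 a)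

lemma enr_smul {k : ℝ} (hk : 0 ≤ k) (v : Fin 3 → ℝ) : enr (k • v) = k * enr v := by
  rw [enr_eq_norm, enr_eq_norm, toLp_smul, norm_smul, Real.norm_of_nonneg hk]

lemma dotProduct_self_eq_enr_sq (v : Fin 3 → ℝ) : v ⬝ᵥ v = enr v ^ 2 := by
  rw [enr_eq_norm, ← real_inner_self_eq_norm_sq]; rfl

section ReducedEnergy

variable {π c t₀ : ℝ}

def reducedEnergy (π c t : ℝ) : ℝ := (t / c) ^ 3 / 3 + 1 / t + π * t

lemma mul_sqrt_sub_pos (hc : 0 < c) : 0 < c * √(4 * c + π ^ 2 * c ^ 4) - π * c ^ 3 := by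
  have hQ : √(4 * c + π ^ 2 * c ^ 4) ^ 2 = 4 * c + π ^ 2 * c ^ 4 := Real.sq_sqrt (by positivity)
  have hcQ : 0 < c * √(4 * c + π ^ 2 * c ^ 4) := mul_pos hc (Real.sqrt_pos.mpr (by positivity))
  by_contra! hle
  have hsq := mul_self_le_mul_self hcQ.le (sub_nonpos.mp hle)
  nlinarith [pow_pos hc 3]

lemma critical_of_sq_eq (hc : 0 ≤ c)
    (h : t₀ ^ 2 = (c * √(4 * c + π ^ 2 * c ^ 4) - π * c ^ 3) / 2) :
    t₀ ^ 4 + π * c ^ 3 * t₀ ^ 2 = c ^ 3 := by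
  have hQ : √(4 * c + π ^ 2 * c ^ 4) ^ 2 = 4 * c + π ^ 2 * c ^ 4 := Real.sq_sqrt (by positivity)
  rw [show t₀ ^ 4 = (t₀ ^ 2) ^ 2 by ring, h]
  linear_combination c ^ 2 / 4 * hQ

lemma reducedEnergy_le_of_critical (hc : 0 < c) (ht₀ : 0 < t₀)
    (hcrit : t₀ ^ 4 + π * c ^ 3 * t₀ ^ 2 = c ^ 3) {t : ℝ} (ht : 0 < t) :
    reducedEnergy π c t₀ ≤ reducedEnergy π c t := by
  have hπ : π = (c ^ 3 - t₀ ^ 4) / (c ^ 3 * t₀ ^ 2) := by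
    field_simp; linarith
  have hdiff : reducedEnergy π c t - reducedEnergy π c t₀
      = (t - t₀) ^ 2 * (t ^ 2 * t₀ ^ 2 + 2 * t * t₀ ^ 3 + 3 * c ^ 3)
          / (3 * t * c ^ 3 * t₀ ^ 2) := by
    rw [reducedEnergy, reducedEnergy, hπ]; field_simp; ring
  have : 0 ≤ reducedEnergy π c t - reducedEnergy π c t₀ := by rw [hdiff]; positivity
  linarith

lemma reducedEnergy_of_critical (hc : 0 < c) (ht₀ : 0 < t₀)
    (hcrit : t₀ ^ 4 + π * c ^ 3 * t₀ ^ 2 = c ^ 3) :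
    reducedEnergy π c t₀ = √2 / 3 * (4 / √(2 * t₀ ^ 2) + π * √(2 * t₀ ^ 2)) := by
  have h2 : √2 ^ 2 = 2 := Real.sq_sqrt (by norm_num)
  rw [reducedEnergy, Real.sqrt_mul zero_le_two, Real.sqrt_sq ht₀.le]
  field_simp
  linear_combination -(t₀ ^ 2 * c ^ 3 * π) * h2 + hcrit

end ReducedEnergy

section Energy

variable (π : ℝ) (ξ₁ ξ₂ : Fin 3 → ℝ)

def energy (a : Fin 3 → ℝ) : EReal :=
  Wex (colsMat ξ₁ ξ₂ a) + ((π * (colsMat ξ₁ ξ₂ a).det : ℝ) : EReal)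

variable {π ξ₁ ξ₂}

lemma energy_of_det_pos {a : Fin 3 → ℝ} (h : 0 < (colsMat ξ₁ ξ₂ a).det) :
    energy π ξ₁ ξ₂ a = (((enr ξ₁ ^ 3 + enr ξ₂ ^ 3) / 3
      + (enr a ^ 3 / 3 + 1 / (colsMat ξ₁ ξ₂ a).det + π * (colsMat ξ₁ ξ₂ a).det) : ℝ) : EReal) := by
  rw [energy, Wex, if_pos h, ← EReal.coe_add]
  congr 1
  show ((enr ξ₁ ^ 3 + enr ξ₂ ^ 3 + enr a ^ 3) / 3 + 1 / _ + π * _ : ℝ) = _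
  ring

lemma energy_of_not_det_pos {a : Fin 3 → ℝ} (h : ¬0 < (colsMat ξ₁ ξ₂ a).det) :
    energy π ξ₁ ξ₂ a = ⊤ := by
  rw [energy, Wex, if_neg h, EReal.top_add_coe]

lemma energy_smul_cross {t₀ : ℝ} (hc : 0 < enr (cross ξ₁ ξ₂)) (ht₀ : 0 < t₀) :
    energy π ξ₁ ξ₂ ((t₀ / enr (cross ξ₁ ξ₂) ^ 2) • cross ξ₁ ξ₂)
      = (((enr ξ₁ ^ 3 + enr ξ₂ ^ 3) / 3 + reducedEnergy π (enr (cross ξ₁ ξ₂)) t₀ : ℝ) : EReal) := by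
  have hdet : (colsMat ξ₁ ξ₂ ((t₀ / enr (cross ξ₁ ξ₂) ^ 2) • cross ξ₁ ξ₂)).det = t₀ := by
    rw [det_colsMat, smul_dotProduct, dotProduct_self_eq_enr_sq, smul_eq_mul]
    field_simp
  rw [energy_of_det_pos (by rw [hdet]; exact ht₀), hdet, enr_smul (by positivity), reducedEnergy]
  field_simp

lemma energy_smul_cross_le {t₀ : ℝ} (hc : 0 < enr (cross ξ₁ ξ₂)) (ht₀ : 0 < t₀)
    (hcrit : t₀ ^ 4 + π * enr (cross ξ₁ ξ₂) ^ 3 * t₀ ^ 2 = enr (cross ξ₁ ξ₂) ^ 3)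
    (a : Fin 3 → ℝ) :
    energy π ξ₁ ξ₂ ((t₀ / enr (cross ξ₁ ξ₂) ^ 2) • cross ξ₁ ξ₂) ≤ energy π ξ₁ ξ₂ a := by
  rw [energy_smul_cross hc ht₀]
  by_cases ht : 0 < (colsMat ξ₁ ξ₂ a).det
  · rw [energy_of_det_pos ht, EReal.coe_le_coe_iff]
    have hcs : (colsMat ξ₁ ξ₂ a).det / enr (cross ξ₁ ξ₂) ≤ enr a := by
      rw [div_le_iff₀ hc, mul_comm, det_colsMat]
      exact dotProduct_le_enr_mul_enr _ _
    have hcube := pow_le_pow_left₀ (by positivity) hcs 3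
    have := reducedEnergy_le_of_critical hc ht₀ hcrit ht
    unfold reducedEnergy at this ⊢
    linarith
  · rw [energy_of_not_det_pos ht]
    exact le_top

end Energy

theorem stmt11 (π : ℝ) (ξ₁ ξ₂ : Fin 3 → ℝ) (hcross : cross ξ₁ ξ₂ ≠ 0) :
    0 < sfun π (cross ξ₁ ξ₂) ∧
    ∃ a₀ : Fin 3 → ℝ,
      (∀ a : Fin 3 → ℝ,
        Wex (colsMat ξ₁ ξ₂ a₀) + ((π * (colsMat ξ₁ ξ₂ a₀).det : ℝ) : EReal)
          ≤ Wex (colsMat ξ₁ ξ₂ a) + ((π * (colsMat ξ₁ ξ₂ a).det : ℝ) : EReal)) ∧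
      Wex (colsMat ξ₁ ξ₂ a₀) + ((π * (colsMat ξ₁ ξ₂ a₀).det : ℝ) : EReal)
        = ((((enr ξ₁) ^ 3 + (enr ξ₂) ^ 3) / 3
            + (Real.sqrt 2 / 3) * (4 / Real.sqrt (sfun π (cross ξ₁ ξ₂))
              + π * Real.sqrt (sfun π (cross ξ₁ ξ₂))) : ℝ) : EReal) := by
  have hc : 0 < enr (cross ξ₁ ξ₂) := by simpa [enr_eq_norm] using hcross
  have hs : 0 < sfun π (cross ξ₁ ξ₂) := mul_sqrt_sub_pos hc
  let t₀ := √(sfun π (cross ξ₁ ξ₂) / 2)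
  have ht₀ : 0 < t₀ := Real.sqrt_pos.mpr (half_pos hs)
  have ht₀_sq : t₀ ^ 2 = sfun π (cross ξ₁ ξ₂) / 2 := Real.sq_sqrt (half_pos hs).le
  have hcrit := critical_of_sq_eq hc.le ht₀_sq
  refine ⟨hs, (t₀ / enr (cross ξ₁ ξ₂) ^ 2) • cross ξ₁ ξ₂, fun a => ?_, ?_⟩
  · exact energy_smul_cross_le hc ht₀ hcrit a
  · rw [← energy, energy_smul_cross hc ht₀, reducedEnergy_of_critical hc ht₀ hcrit,
      show sfun π (cross ξ₁ ξ₂) = 2 * t₀ ^ 2 by linarith]
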